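/- arXiv:1603.06636 — 2 statements merged into one kernel-verified Lean document; each statement's English description precedes it below -/
import Mathlib

section
/- Let W, W' ⊆ V be k-dimensional subspaces and let L, L' ⊆ V₁ be one-dimensional subspaces. Then there exists a pair (g₁, g₂) ∈ GL(V₁) × GL(V₂), acting on V = V₁ ⊕ V₂ as the direct sum g₁ ⊕ g₂, with (g₁ ⊕ g₂)(W) = W' and g₁(L) = L', if and only if the following four conditions hold: dim(W ∩ V₁) = dim(W' ∩ V₁); dim(W ∩ V₂) = dim(W' ∩ V₂); L ⊆ W if and only if L' ⊆ W'; and L ⊆ W + V₂ if and only if L' ⊆ W' + V₂. -/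
open Submodule Module LinearMap Function
set_option linter.unusedSectionVars false
set_option maxHeartbeats 1000000

namespace Stmt18Aux

variable {M N : Type} [AddCommGroup M] [Module ℂ M] [AddCommGroup N] [Module ℂ N]

lemma finrank_map_inj (f : M →ₗ[ℂ] N) (hf : Function.Injective f) (U : Submodule ℂ M) :
    finrank ℂ (U.map f) = finrank ℂ U :=
  ((U.equivMapOfInjective f hf).finrank_eq).symm

lemma compl_in {L A : Submodule ℂ M} (h : L ≤ A) :
    ∃ C : Submodule ℂ M, L ⊓ C = ⊥ ∧ L ⊔ C = A := by
  obtain ⟨C₀, hC₀⟩ := Submodule.exists_isCompl (L.comap A.subtype)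
  have hmapL : (L.comap A.subtype).map A.subtype = L := by
    rw [Submodule.map_comap_subtype, inf_eq_right.2 h]
  refine ⟨C₀.map A.subtype, ?_, ?_⟩
  · rw [← hmapL, ← Submodule.map_inf _ A.injective_subtype, hC₀.inf_eq_bot, Submodule.map_bot]
  · rw [← hmapL, ← Submodule.map_sup, hC₀.sup_eq_top, Submodule.map_subtype_top]

lemma line_inf [FiniteDimensional ℂ M] {L A : Submodule ℂ M} (hL : finrank ℂ L = 1)
    (h : ¬ L ≤ A) : L ⊓ A = ⊥ := by
  rcases Nat.lt_or_ge (finrank ℂ (L ⊓ A : Submodule ℂ M)) 1 with h1 | h1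
  · exact (Submodule.finrank_eq_zero).1 (Nat.lt_one_iff.1 h1)
  · exfalso
    apply h
    have : L ⊓ A = L := Submodule.eq_of_le_of_finrank_le inf_le_left (by omega)
    rw [← this]; exact inf_le_right


lemma four_block [FiniteDimensional ℂ M] [FiniteDimensional ℂ N]
    (hMN : finrank ℂ M = finrank ℂ N)
    (Z0 Z1 Z2 Z3 : Submodule ℂ M) (Y0 Y1 Y2 Y3 : Submodule ℂ N)
    (hz1 : Z0 ⊓ Z1 = ⊥) (hz2 : (Z0 ⊔ Z1) ⊓ Z2 = ⊥) (hz3 : (Z0 ⊔ Z1 ⊔ Z2) ⊓ Z3 = ⊥)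
    (hztop : Z0 ⊔ Z1 ⊔ Z2 ⊔ Z3 = ⊤) (hytop : Y0 ⊔ Y1 ⊔ Y2 ⊔ Y3 = ⊤)
    (e0 : Z0 ≃ₗ[ℂ] Y0) (e1 : Z1 ≃ₗ[ℂ] Y1) (e2 : Z2 ≃ₗ[ℂ] Y2) (e3 : Z3 ≃ₗ[ℂ] Y3) :
    ∃ e : M ≃ₗ[ℂ] N,
      (∀ x : Z0, e x = (e0 x : N)) ∧ (∀ x : Z1, e x = (e1 x : N)) ∧
      (∀ x : Z2, e x = (e2 x : N)) ∧ (∀ x : Z3, e x = (e3 x : N)) ∧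
      Z0.map (e : M →ₗ[ℂ] N) = Y0 ∧ Z1.map (e : M →ₗ[ℂ] N) = Y1 ∧
      Z2.map (e : M →ₗ[ℂ] N) = Y2 ∧ Z3.map (e : M →ₗ[ℂ] N) = Y3 := by
  -- complementarity of each block with the sup of the others
  have hc0 : IsCompl Z0 (Z1 ⊔ Z2 ⊔ Z3) := by
    constructor
    · rw [Submodule.disjoint_def]
      intro x hx hx'
      rcases Submodule.mem_sup.1 hx' with ⟨u, hu, v, hv, huv⟩
      rcases Submodule.mem_sup.1 hu with ⟨a, ha, b, hb, rfl⟩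
      have hv0 : v = 0 := by
        have hmem : v ∈ (Z0 ⊔ Z1 ⊔ Z2) ⊓ Z3 := by
          refine ⟨?_, hv⟩
          have : v = x - a - b := by rw [← huv]; abel
          rw [this]
          exact sub_mem (sub_mem (mem_sup_left (mem_sup_left hx))
            (mem_sup_left (mem_sup_right ha))) (mem_sup_right hb)
        rw [hz3] at hmem; exact hmem
      have hb0 : b = 0 := by
        have hmem : b ∈ (Z0 ⊔ Z1) ⊓ Z2 := by
          refine ⟨?_, hb⟩
          have : b = x - a := by rw [← huv, hv0]; abel
          rw [this]
          exact sub_mem (mem_sup_left hx) (mem_sup_right ha)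
        rw [hz2] at hmem; exact hmem
      have hxa : x = a := by rw [← huv, hv0, hb0]; abel
      have hmem : x ∈ Z0 ⊓ Z1 := ⟨hx, hxa ▸ ha⟩
      rw [hz1] at hmem; exact hmem
    · rw [codisjoint_iff, ← sup_assoc, ← sup_assoc]; exact hztop
  have hc1 : IsCompl Z1 (Z0 ⊔ Z2 ⊔ Z3) := by
    constructor
    · rw [Submodule.disjoint_def]
      intro x hx hx'
      rcases Submodule.mem_sup.1 hx' with ⟨u, hu, v, hv, huv⟩
      rcases Submodule.mem_sup.1 hu with ⟨a, ha, b, hb, rfl⟩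
      have hv0 : v = 0 := by
        have hmem : v ∈ (Z0 ⊔ Z1 ⊔ Z2) ⊓ Z3 := by
          refine ⟨?_, hv⟩
          have : v = x - a - b := by rw [← huv]; abel
          rw [this]
          exact sub_mem (sub_mem (mem_sup_left (mem_sup_right hx))
            (mem_sup_left (mem_sup_left ha))) (mem_sup_right hb)
        rw [hz3] at hmem; exact hmem
      have hb0 : b = 0 := by
        have hmem : b ∈ (Z0 ⊔ Z1) ⊓ Z2 := by
          refine ⟨?_, hb⟩
          have : b = x - a := by rw [← huv, hv0]; abel
          rw [this]
          exact sub_mem (mem_sup_right hx) (mem_sup_left ha)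
        rw [hz2] at hmem; exact hmem
      have hxa : x = a := by rw [← huv, hv0, hb0]; abel
      have hmem : x ∈ Z0 ⊓ Z1 := ⟨hxa ▸ ha, hx⟩
      rw [hz1] at hmem; exact hmem
    · rw [codisjoint_iff, ← hztop]; ac_rfl
  have hc2 : IsCompl Z2 (Z0 ⊔ Z1 ⊔ Z3) := by
    constructor
    · rw [Submodule.disjoint_def]
      intro x hx hx'
      rcases Submodule.mem_sup.1 hx' with ⟨u, hu, v, hv, huv⟩
      have hv0 : v = 0 := by
        have hmem : v ∈ (Z0 ⊔ Z1 ⊔ Z2) ⊓ Z3 := by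
          refine ⟨?_, hv⟩
          have : v = x - u := by rw [← huv]; abel
          rw [this]
          exact sub_mem (mem_sup_right hx) (mem_sup_left hu)
        rw [hz3] at hmem; exact hmem
      have hxu : x = u := by rw [← huv, hv0]; abel
      have hmem : x ∈ (Z0 ⊔ Z1) ⊓ Z2 := ⟨hxu ▸ hu, hx⟩
      rw [hz2] at hmem; exact hmem
    · rw [codisjoint_iff, ← hztop]; ac_rfl
  have hc3 : IsCompl Z3 (Z0 ⊔ Z1 ⊔ Z2) := by
    constructor
    · rw [Submodule.disjoint_def]
      intro x hx hx'
      have hmem : x ∈ (Z0 ⊔ Z1 ⊔ Z2) ⊓ Z3 := ⟨hx', hx⟩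
      rw [hz3] at hmem; exact hmem
    · rw [codisjoint_iff, ← hztop]; ac_rfl
  set π0 := Submodule.linearProjOfIsCompl Z0 (Z1 ⊔ Z2 ⊔ Z3) hc0 with hπ0
  set π1 := Submodule.linearProjOfIsCompl Z1 (Z0 ⊔ Z2 ⊔ Z3) hc1 with hπ1
  set π2 := Submodule.linearProjOfIsCompl Z2 (Z0 ⊔ Z1 ⊔ Z3) hc2 with hπ2
  set π3 := Submodule.linearProjOfIsCompl Z3 (Z0 ⊔ Z1 ⊔ Z2) hc3 with hπ3
  set f : M →ₗ[ℂ] N :=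
    Y0.subtype ∘ₗ (e0 : Z0 →ₗ[ℂ] Y0) ∘ₗ π0 + Y1.subtype ∘ₗ (e1 : Z1 →ₗ[ℂ] Y1) ∘ₗ π1 +
    Y2.subtype ∘ₗ (e2 : Z2 →ₗ[ℂ] Y2) ∘ₗ π2 + Y3.subtype ∘ₗ (e3 : Z3 →ₗ[ℂ] Y3) ∘ₗ π3 with hf
  have pw0 : ∀ x : Z0, f x = (e0 x : N) := by
    intro x
    have h0 : π0 (x : M) = x := Submodule.linearProjOfIsCompl_apply_left hc0 x
    have h1 : π1 (x : M) = 0 := Submodule.projectionOnto_apply_of_mem_right hc1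
      (mem_sup_left (mem_sup_left x.2))
    have h2 : π2 (x : M) = 0 := Submodule.projectionOnto_apply_of_mem_right hc2
      (mem_sup_left (mem_sup_left x.2))
    have h3 : π3 (x : M) = 0 := Submodule.projectionOnto_apply_of_mem_right hc3
      (mem_sup_left (mem_sup_left x.2))
    simp [hf, h0, h1, h2, h3]
  have pw1 : ∀ x : Z1, f x = (e1 x : N) := by
    intro x
    have h0 : π0 (x : M) = 0 := Submodule.projectionOnto_apply_of_mem_right hc0
      (mem_sup_left (mem_sup_left x.2))
    have h1 : π1 (x : M) = x := Submodule.linearProjOfIsCompl_apply_left hc1 x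
    have h2 : π2 (x : M) = 0 := Submodule.projectionOnto_apply_of_mem_right hc2
      (mem_sup_left (mem_sup_right x.2))
    have h3 : π3 (x : M) = 0 := Submodule.projectionOnto_apply_of_mem_right hc3
      (mem_sup_left (mem_sup_right x.2))
    simp [hf, h0, h1, h2, h3]
  have pw2 : ∀ x : Z2, f x = (e2 x : N) := by
    intro x
    have h0 : π0 (x : M) = 0 := Submodule.projectionOnto_apply_of_mem_right hc0
      (mem_sup_left (mem_sup_right x.2))
    have h1 : π1 (x : M) = 0 := Submodule.projectionOnto_apply_of_mem_right hc1
      (mem_sup_left (mem_sup_right x.2))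
    have h2 : π2 (x : M) = x := Submodule.linearProjOfIsCompl_apply_left hc2 x
    have h3 : π3 (x : M) = 0 := Submodule.projectionOnto_apply_of_mem_right hc3
      (mem_sup_right x.2)
    simp [hf, h0, h1, h2, h3]
  have pw3 : ∀ x : Z3, f x = (e3 x : N) := by
    intro x
    have h0 : π0 (x : M) = 0 := Submodule.projectionOnto_apply_of_mem_right hc0
      (mem_sup_right x.2)
    have h1 : π1 (x : M) = 0 := Submodule.projectionOnto_apply_of_mem_right hc1
      (mem_sup_right x.2)
    have h2 : π2 (x : M) = 0 := Submodule.projectionOnto_apply_of_mem_right hc2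
      (mem_sup_right x.2)
    have h3 : π3 (x : M) = x := Submodule.linearProjOfIsCompl_apply_left hc3 x
    simp [hf, h0, h1, h2, h3]
  have hsurj : Surjective f := by
    rw [← LinearMap.range_eq_top, ← top_le_iff, ← hytop]
    have key : ∀ {Z : Submodule ℂ M} {Y : Submodule ℂ N} (ez : Z ≃ₗ[ℂ] Y),
        (∀ x : Z, f x = (ez x : N)) → Y ≤ LinearMap.range f := by
      intro Z Y ez pw y hy
      exact ⟨(ez.symm ⟨y, hy⟩ : Z), by rw [pw]; simp⟩
    exact sup_le (sup_le (sup_le (key e0 pw0) (key e1 pw1)) (key e2 pw2)) (key e3 pw3)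
  have hinj : Injective f :=
    (LinearMap.injective_iff_surjective_of_finrank_eq_finrank hMN).2 hsurj
  set e := LinearEquiv.ofBijective f ⟨hinj, hsurj⟩ with he
  have hecoe : ∀ x : M, e x = f x := fun x => rfl
  have map_eq : ∀ {Z : Submodule ℂ M} {Y : Submodule ℂ N} (ez : Z ≃ₗ[ℂ] Y),
      (∀ x : Z, f x = (ez x : N)) → Z.map (e : M →ₗ[ℂ] N) = Y := by
    intro Z Y ez pw
    apply Submodule.eq_of_le_of_finrank_le
    · rintro _ ⟨x, hx, rfl⟩
      have : e x = (ez ⟨x, hx⟩ : N) := by rw [hecoe]; exact pw ⟨x, hx⟩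
      rw [show ((e : M →ₗ[ℂ] N) x) = e x from rfl, this]
      exact Subtype.coe_prop _
    · rw [LinearEquiv.finrank_map_eq e Z, ez.finrank_eq]
  refine ⟨e, ?_, ?_, ?_, ?_, ?_, ?_, ?_, ?_⟩
  · intro x; exact pw0 x
  · intro x; exact pw1 x
  · intro x; exact pw2 x
  · intro x; exact pw3 x
  · exact map_eq e0 pw0
  · exact map_eq e1 pw1
  · exact map_eq e2 pw2
  · exact map_eq e3 pw3


variable {V₁ V₂ : Type} [AddCommGroup V₁] [Module ℂ V₁] [AddCommGroup V₂] [Module ℂ V₂]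

lemma fst_eq_range_inl : Submodule.fst ℂ V₁ V₂ = LinearMap.range (inl ℂ V₁ V₂) := by
  rw [show Submodule.fst ℂ V₁ V₂ = LinearMap.ker (LinearMap.snd ℂ V₁ V₂) from rfl,
    LinearMap.ker_snd]

lemma snd_eq_range_inr : Submodule.snd ℂ V₁ V₂ = LinearMap.range (inr ℂ V₁ V₂) := by
  rw [show Submodule.snd ℂ V₁ V₂ = LinearMap.ker (LinearMap.fst ℂ V₁ V₂) from rfl,
    LinearMap.ker_fst]

variable [FiniteDimensional ℂ V₁] [FiniteDimensional ℂ V₂]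

lemma finrank_comap_inl (W : Submodule ℂ (V₁ × V₂)) :
    finrank ℂ (W.comap (inl ℂ V₁ V₂)) =
      finrank ℂ (W ⊓ Submodule.fst ℂ V₁ V₂ : Submodule ℂ (V₁ × V₂)) := by
  rw [← finrank_map_inj (inl ℂ V₁ V₂) LinearMap.inl_injective, Submodule.map_comap_eq,
    ← fst_eq_range_inl, inf_comm]

lemma finrank_comap_inr (W : Submodule ℂ (V₁ × V₂)) :
    finrank ℂ (W.comap (inr ℂ V₁ V₂)) =
      finrank ℂ (W ⊓ Submodule.snd ℂ V₁ V₂ : Submodule ℂ (V₁ × V₂)) := by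
  rw [← finrank_map_inj (inr ℂ V₁ V₂) LinearMap.inr_injective, Submodule.map_comap_eq,
    ← snd_eq_range_inr, inf_comm]

lemma rank_split_fst (W : Submodule ℂ (V₁ × V₂)) :
    finrank ℂ (W.map (LinearMap.fst ℂ V₁ V₂)) + finrank ℂ (W.comap (inr ℂ V₁ V₂)) =
      finrank ℂ W := by
  have h := LinearMap.finrank_range_add_finrank_ker ((LinearMap.fst ℂ V₁ V₂).comp W.subtype)
  rw [LinearMap.range_comp, Submodule.range_subtype, LinearMap.ker_comp] at h
  have h2 : finrank ℂ (Submodule.comap W.subtype (LinearMap.ker (LinearMap.fst ℂ V₁ V₂))) =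
      finrank ℂ (W.comap (inr ℂ V₁ V₂)) := by
    rw [← finrank_map_inj W.subtype W.injective_subtype, Submodule.map_comap_subtype,
      LinearMap.ker_fst, inf_comm, ← Submodule.map_comap_eq,
      finrank_map_inj (inr ℂ V₁ V₂) LinearMap.inr_injective]
  rw [← h2]; exact h

lemma rank_split_snd (W : Submodule ℂ (V₁ × V₂)) :
    finrank ℂ (W.map (LinearMap.snd ℂ V₁ V₂)) + finrank ℂ (W.comap (inl ℂ V₁ V₂)) =
      finrank ℂ W := by
  have h := LinearMap.finrank_range_add_finrank_ker ((LinearMap.snd ℂ V₁ V₂).comp W.subtype)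
  rw [LinearMap.range_comp, Submodule.range_subtype, LinearMap.ker_comp] at h
  have h2 : finrank ℂ (Submodule.comap W.subtype (LinearMap.ker (LinearMap.snd ℂ V₁ V₂))) =
      finrank ℂ (W.comap (inl ℂ V₁ V₂)) := by
    rw [← finrank_map_inj W.subtype W.injective_subtype, Submodule.map_comap_subtype,
      LinearMap.ker_snd, inf_comm, ← Submodule.map_comap_eq,
      finrank_map_inj (inl ℂ V₁ V₂) LinearMap.inl_injective]
  rw [← h2]; exact h

lemma sup_snd_eq (W : Submodule ℂ (V₁ × V₂)) :
    W ⊔ Submodule.snd ℂ V₁ V₂ = (W.map (LinearMap.fst ℂ V₁ V₂)).comap (LinearMap.fst ℂ V₁ V₂) := by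
  apply le_antisymm
  · refine sup_le (Submodule.le_comap_map _ _) (Submodule.comap_mono bot_le)
  · intro x hx
    rcases Submodule.mem_comap.1 hx with hx1
    rcases Submodule.mem_map.1 hx1 with ⟨w, hw, hww⟩
    have : x = w + (x - w) := by abel
    rw [this]
    refine Submodule.add_mem _ (mem_sup_left hw) (mem_sup_right ?_)
    show (x - w).1 ∈ (⊥ : Submodule ℂ V₁)
    rw [Submodule.mem_bot, Prod.fst_sub, sub_eq_zero]
    exact hww.symm

lemma cond3_iff (W : Submodule ℂ (V₁ × V₂)) (L : Submodule ℂ V₁) :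
    L.map (inl ℂ V₁ V₂) ≤ W ↔ L ≤ W.comap (inl ℂ V₁ V₂) :=
  Submodule.map_le_iff_le_comap

lemma cond4_iff (W : Submodule ℂ (V₁ × V₂)) (L : Submodule ℂ V₁) :
    L.map (inl ℂ V₁ V₂) ≤ W ⊔ Submodule.snd ℂ V₁ V₂ ↔ L ≤ W.map (LinearMap.fst ℂ V₁ V₂) := by
  rw [sup_snd_eq, Submodule.map_le_iff_le_comap, ← Submodule.comap_comp,
    LinearMap.fst_comp_inl, Submodule.comap_id]

lemma A_le_P (W : Submodule ℂ (V₁ × V₂)) :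
    W.comap (inl ℂ V₁ V₂) ≤ W.map (LinearMap.fst ℂ V₁ V₂) := by
  intro x hx
  exact ⟨(x, 0), hx, rfl⟩

lemma B_le_Q (W : Submodule ℂ (V₁ × V₂)) :
    W.comap (inr ℂ V₁ V₂) ≤ W.map (LinearMap.snd ℂ V₁ V₂) := by
  intro x hx
  exact ⟨(0, x), hx, rfl⟩


lemma graph_equivs (W : Submodule ℂ (V₁ × V₂)) (C : Submodule ℂ V₁) (D : Submodule ℂ V₂)
    (hAC : W.comap (inl ℂ V₁ V₂) ⊓ C = ⊥)
    (hACP : W.comap (inl ℂ V₁ V₂) ⊔ C = W.map (LinearMap.fst ℂ V₁ V₂))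
    (hBD : W.comap (inr ℂ V₁ V₂) ⊓ D = ⊥)
    (hBDQ : W.comap (inr ℂ V₁ V₂) ⊔ D = W.map (LinearMap.snd ℂ V₁ V₂)) :
    ∃ (α : (W ⊓ C.comap (LinearMap.fst ℂ V₁ V₂) ⊓ D.comap (LinearMap.snd ℂ V₁ V₂) :
        Submodule ℂ (V₁ × V₂)) ≃ₗ[ℂ] C)
      (β : (W ⊓ C.comap (LinearMap.fst ℂ V₁ V₂) ⊓ D.comap (LinearMap.snd ℂ V₁ V₂) :
        Submodule ℂ (V₁ × V₂)) ≃ₗ[ℂ] D),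
      (∀ x, (α x : V₁) = (x : V₁ × V₂).1) ∧ (∀ x, (β x : V₂) = (x : V₁ × V₂).2) := by
  set G : Submodule ℂ (V₁ × V₂) :=
    W ⊓ C.comap (LinearMap.fst ℂ V₁ V₂) ⊓ D.comap (LinearMap.snd ℂ V₁ V₂) with hG
  have hGmem : ∀ {z : V₁ × V₂}, z ∈ G →
      z ∈ W ∧ z.1 ∈ C ∧ z.2 ∈ D := fun h => ⟨h.1.1, ⟨h.1.2, h.2⟩⟩
  have hGW : ∀ x : G, (x : V₁ × V₂) ∈ W := fun x => x.2.1.1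
  have hGC : ∀ x : G, (x : V₁ × V₂).1 ∈ C := fun x => x.2.1.2
  have hGD : ∀ x : G, (x : V₁ × V₂).2 ∈ D := fun x => x.2.2
  set αl : G →ₗ[ℂ] C :=
    LinearMap.codRestrict C ((LinearMap.fst ℂ V₁ V₂).comp G.subtype) (fun x => hGC x) with hαl
  set βl : G →ₗ[ℂ] D :=
    LinearMap.codRestrict D ((LinearMap.snd ℂ V₁ V₂).comp G.subtype) (fun x => hGD x) with hβl
  have hαinj : Injective αl := by
    intro x y hxy
    have h1 : (x : V₁ × V₂).1 = (y : V₁ × V₂).1 := congrArg Subtype.val hxy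
    have hsub : (x : V₁ × V₂) - y ∈ G := sub_mem x.2 y.2
    have h2 : ((x : V₁ × V₂) - y).1 = 0 := by rw [Prod.fst_sub, sub_eq_zero]; exact h1
    have h3 : ((x : V₁ × V₂) - y).2 ∈ W.comap (inr ℂ V₁ V₂) := by
      show inr ℂ V₁ V₂ ((x : V₁ × V₂) - y).2 ∈ W
      have : inr ℂ V₁ V₂ ((x : V₁ × V₂) - y).2 = (x : V₁ × V₂) - y := by
        rw [LinearMap.inr_apply]; exact Prod.ext h2.symm rfl
      rw [this]; exact (hGmem hsub).1
    have h4 : ((x : V₁ × V₂) - y).2 ∈ W.comap (inr ℂ V₁ V₂) ⊓ D := ⟨h3, (hGmem hsub).2.2⟩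
    rw [hBD] at h4
    have h5 : (x : V₁ × V₂) - y = 0 := Prod.ext h2 h4
    exact Subtype.ext (by rw [← sub_eq_zero]; exact h5)
  have hαsurj : Surjective αl := by
    intro c
    have hcP : (c : V₁) ∈ W.map (LinearMap.fst ℂ V₁ V₂) := hACP ▸ mem_sup_right c.2
    rcases hcP with ⟨w, hw, hwc⟩
    have hw2 : w.2 ∈ W.comap (inr ℂ V₁ V₂) ⊔ D := hBDQ ▸ ⟨w, hw, rfl⟩
    rcases mem_sup.1 hw2 with ⟨b, hb, d, hd, hbd⟩
    have hwb : w - (0, b) ∈ W := by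
      refine sub_mem hw ?_
      show ((0 : V₁), b) ∈ W
      have : ((0 : V₁), b) = inr ℂ V₁ V₂ b := rfl
      rw [this]; exact hb
    have hmem : w - (0, b) ∈ G := by
      refine ⟨⟨hwb, ?_⟩, ?_⟩
      · show (w - (0, b)).1 ∈ C
        have hwc' : w.1 = (c : V₁) := hwc
        have heq : (w - (0, b)).1 = (c : V₁) := by rw [Prod.fst_sub]; simp [hwc']
        rw [heq]; exact c.2
      · show (w - (0, b)).2 ∈ D
        rw [Prod.snd_sub]
        have : w.2 - b = d := by rw [← hbd]; abel
        rw [this]; exact hd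
    refine ⟨⟨w - (0, b), hmem⟩, ?_⟩
    apply Subtype.ext
    show (w - (0, b)).1 = (c : V₁)
    rw [Prod.fst_sub]; simpa using hwc
  have hβinj : Injective βl := by
    intro x y hxy
    have h1 : (x : V₁ × V₂).2 = (y : V₁ × V₂).2 := congrArg Subtype.val hxy
    have hsub : (x : V₁ × V₂) - y ∈ G := sub_mem x.2 y.2
    have h2 : ((x : V₁ × V₂) - y).2 = 0 := by rw [Prod.snd_sub, sub_eq_zero]; exact h1
    have h3 : ((x : V₁ × V₂) - y).1 ∈ W.comap (inl ℂ V₁ V₂) := by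
      show inl ℂ V₁ V₂ ((x : V₁ × V₂) - y).1 ∈ W
      have : inl ℂ V₁ V₂ ((x : V₁ × V₂) - y).1 = (x : V₁ × V₂) - y := by
        rw [LinearMap.inl_apply]; exact Prod.ext rfl h2.symm
      rw [this]; exact (hGmem hsub).1
    have h4 : ((x : V₁ × V₂) - y).1 ∈ W.comap (inl ℂ V₁ V₂) ⊓ C := ⟨h3, (hGmem hsub).2.1⟩
    rw [hAC] at h4
    have h5 : (x : V₁ × V₂) - y = 0 := Prod.ext h4 h2
    exact Subtype.ext (by rw [← sub_eq_zero]; exact h5)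
  have hβsurj : Surjective βl := by
    intro d
    have hdQ : (d : V₂) ∈ W.map (LinearMap.snd ℂ V₁ V₂) := hBDQ ▸ mem_sup_right d.2
    rcases hdQ with ⟨w, hw, hwd⟩
    have hw1 : w.1 ∈ W.comap (inl ℂ V₁ V₂) ⊔ C := hACP ▸ ⟨w, hw, rfl⟩
    rcases mem_sup.1 hw1 with ⟨a, ha, c, hc, hac⟩
    have hwa : w - (a, 0) ∈ W := by
      refine sub_mem hw ?_
      show (a, (0 : V₂)) ∈ W
      have : (a, (0 : V₂)) = inl ℂ V₁ V₂ a := rfl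
      rw [this]; exact ha
    have hmem : w - (a, 0) ∈ G := by
      refine ⟨⟨hwa, ?_⟩, ?_⟩
      · show (w - (a, 0)).1 ∈ C
        rw [Prod.fst_sub]
        have : w.1 - a = c := by rw [← hac]; abel
        rw [this]; exact hc
      · show (w - (a, 0)).2 ∈ D
        have hwd' : w.2 = (d : V₂) := hwd
        have heq : (w - (a, 0)).2 = (d : V₂) := by rw [Prod.snd_sub]; simp [hwd']
        rw [heq]; exact d.2
    refine ⟨⟨w - (a, 0), hmem⟩, ?_⟩
    apply Subtype.ext
    show (w - (a, 0)).2 = (d : V₂)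
    rw [Prod.snd_sub]; simpa using hwd
  exact ⟨LinearEquiv.ofBijective αl ⟨hαinj, hαsurj⟩, LinearEquiv.ofBijective βl ⟨hβinj, hβsurj⟩,
    fun x => rfl, fun x => rfl⟩


lemma core [FiniteDimensional ℂ V₁] [FiniteDimensional ℂ V₂] {k : ℕ}
    (W W' : Submodule ℂ (V₁ × V₂))
    (hW : finrank ℂ W = k) (hW' : finrank ℂ W' = k)
    (C C' : Submodule ℂ V₁)
    (hAC : W.comap (inl ℂ V₁ V₂) ⊓ C = ⊥)
    (hACP : W.comap (inl ℂ V₁ V₂) ⊔ C = W.map (LinearMap.fst ℂ V₁ V₂))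
    (hAC' : W'.comap (inl ℂ V₁ V₂) ⊓ C' = ⊥)
    (hACP' : W'.comap (inl ℂ V₁ V₂) ⊔ C' = W'.map (LinearMap.fst ℂ V₁ V₂))
    (hB : finrank ℂ (W.comap (inr ℂ V₁ V₂)) = finrank ℂ (W'.comap (inr ℂ V₁ V₂)))
    (g₁ : V₁ ≃ₗ[ℂ] V₁)
    (hg₁A : (W.comap (inl ℂ V₁ V₂)).map (g₁ : V₁ →ₗ[ℂ] V₁) = W'.comap (inl ℂ V₁ V₂))
    (hg₁C : C.map (g₁ : V₁ →ₗ[ℂ] V₁) = C') :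
    ∃ g₂ : V₂ ≃ₗ[ℂ] V₂,
      W.map (LinearMap.prodMap (g₁ : V₁ →ₗ[ℂ] V₁) (g₂ : V₂ →ₗ[ℂ] V₂)) = W' := by
  obtain ⟨D, hBD, hBDQ⟩ := compl_in (B_le_Q W)
  obtain ⟨D', hBD', hBDQ'⟩ := compl_in (B_le_Q W')
  obtain ⟨E, hQE⟩ := Submodule.exists_isCompl (W.map (LinearMap.snd ℂ V₁ V₂))
  obtain ⟨E', hQE'⟩ := Submodule.exists_isCompl (W'.map (LinearMap.snd ℂ V₁ V₂))
  have hA : finrank ℂ (W.comap (inl ℂ V₁ V₂)) = finrank ℂ (W'.comap (inl ℂ V₁ V₂)) := by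
    rw [← hg₁A, finrank_map_inj _ g₁.injective]
  have hrQ := rank_split_snd W
  have hrQ' := rank_split_snd W'
  rw [hW] at hrQ
  rw [hW'] at hrQ'
  have hQ : finrank ℂ (W.map (LinearMap.snd ℂ V₁ V₂)) =
      finrank ℂ (W'.map (LinearMap.snd ℂ V₁ V₂)) := by omega
  have hrD := Submodule.finrank_sup_add_finrank_inf_eq (W.comap (inr ℂ V₁ V₂)) D
  rw [hBD, hBDQ, finrank_bot] at hrD
  have hrD' := Submodule.finrank_sup_add_finrank_inf_eq (W'.comap (inr ℂ V₁ V₂)) D'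
  rw [hBD', hBDQ', finrank_bot] at hrD'
  have hD : finrank ℂ D = finrank ℂ D' := by omega
  have hrE := Submodule.finrank_sup_add_finrank_inf_eq (W.map (LinearMap.snd ℂ V₁ V₂)) E
  rw [hQE.inf_eq_bot, codisjoint_iff.1 hQE.codisjoint, finrank_bot, finrank_top] at hrE
  have hrE' := Submodule.finrank_sup_add_finrank_inf_eq (W'.map (LinearMap.snd ℂ V₁ V₂)) E'
  rw [hQE'.inf_eq_bot, codisjoint_iff.1 hQE'.codisjoint, finrank_bot, finrank_top] at hrE'
  have hE : finrank ℂ E = finrank ℂ E' := by omega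
  obtain ⟨α, β, hα, hβ⟩ := graph_equivs W C D hAC hACP hBD hBDQ
  obtain ⟨α', β', hα', hβ'⟩ := graph_equivs W' C' D' hAC' hACP' hBD' hBDQ'
  set gC : C ≃ₗ[ℂ] C' := (g₁.submoduleMap C).trans (LinearEquiv.ofEq _ _ hg₁C) with hgC
  have hgCpt : ∀ c : C, (gC c : V₁) = g₁ (c : V₁) := by
    intro c
    rw [hgC]
    simp [LinearEquiv.trans_apply]
  set eD : D ≃ₗ[ℂ] D' := β.symm.trans (α.trans (gC.trans (α'.symm.trans β'))) with heD
  obtain ⟨g₂, pB, pD, pE, pbot, mB, mD, mE, mbot⟩ :=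
    four_block rfl (W.comap (inr ℂ V₁ V₂)) D E ⊥ (W'.comap (inr ℂ V₁ V₂)) D' E' ⊥
      hBD (by rw [hBDQ]; exact hQE.inf_eq_bot) (inf_bot_eq _)
      (by rw [sup_bot_eq, hBDQ]; exact codisjoint_iff.1 hQE.codisjoint)
      (by rw [sup_bot_eq, hBDQ']; exact codisjoint_iff.1 hQE'.codisjoint)
      (LinearEquiv.ofFinrankEq _ _ hB) eD (LinearEquiv.ofFinrankEq _ _ hE) (LinearEquiv.refl ℂ _)
  refine ⟨g₂, ?_⟩
  have hdec : W = (W.comap (inl ℂ V₁ V₂)).map (inl ℂ V₁ V₂) ⊔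
      (W.comap (inr ℂ V₁ V₂)).map (inr ℂ V₁ V₂) ⊔
      (W ⊓ C.comap (LinearMap.fst ℂ V₁ V₂) ⊓ D.comap (LinearMap.snd ℂ V₁ V₂)) := by
    apply le_antisymm
    · intro w hw
      have h1 : w.1 ∈ W.comap (inl ℂ V₁ V₂) ⊔ C := by
        rw [hACP]; exact ⟨w, hw, rfl⟩
      rcases mem_sup.1 h1 with ⟨a, ha, c, hc, hac⟩
      have h2 : w.2 ∈ W.comap (inr ℂ V₁ V₂) ⊔ D := by
        rw [hBDQ]; exact ⟨w, hw, rfl⟩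
      rcases mem_sup.1 h2 with ⟨b, hb, d, hd, hbd⟩
      have haW : (a, (0 : V₂)) ∈ W := by
        have : (a, (0 : V₂)) = inl ℂ V₁ V₂ a := rfl
        rw [this]; exact ha
      have hbW : ((0 : V₁), b) ∈ W := by
        have : ((0 : V₁), b) = inr ℂ V₁ V₂ b := rfl
        rw [this]; exact hb
      have hwG : w - (a, 0) - (0, b) ∈
          W ⊓ C.comap (LinearMap.fst ℂ V₁ V₂) ⊓ D.comap (LinearMap.snd ℂ V₁ V₂) := by
        refine ⟨⟨sub_mem (sub_mem hw haW) hbW, ?_⟩, ?_⟩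
        · show (w - (a, 0) - (0, b)).1 ∈ C
          have hre : (w - (a, 0) - (0, b)).1 = w.1 - a - 0 := rfl
          rw [hre, sub_zero, ← hac, add_sub_cancel_left]
          exact hc
        · show (w - (a, 0) - (0, b)).2 ∈ D
          have hre : (w - (a, 0) - (0, b)).2 = w.2 - 0 - b := rfl
          rw [hre, sub_zero, ← hbd, add_sub_cancel_left]
          exact hd
      have hsplit : w = (a, (0 : V₂)) + ((0 : V₁), b) + (w - (a, 0) - (0, b)) := by abel
      rw [hsplit]
      refine add_mem (add_mem ?_ ?_) (mem_sup_right hwG)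
      · exact mem_sup_left (mem_sup_left (Submodule.mem_map_of_mem ha))
      · exact mem_sup_left (mem_sup_right (Submodule.mem_map_of_mem hb))
    · refine sup_le (sup_le ?_ ?_) ?_
      · exact Submodule.map_comap_le _ _
      · exact Submodule.map_comap_le _ _
      · exact le_trans inf_le_left inf_le_left
  apply Submodule.eq_of_le_of_finrank_le
  · conv_lhs => rw [hdec]
    rw [Submodule.map_sup, Submodule.map_sup]
    refine sup_le (sup_le ?_ ?_) ?_
    · rintro x ⟨y, ⟨a, ha, rfl⟩, rfl⟩
      have h1 : LinearMap.prodMap (g₁ : V₁ →ₗ[ℂ] V₁) (g₂ : V₂ →ₗ[ℂ] V₂) (inl ℂ V₁ V₂ a) =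
          inl ℂ V₁ V₂ (g₁ a) := by simp
      rw [h1]
      have : g₁ a ∈ W'.comap (inl ℂ V₁ V₂) := by
        rw [← hg₁A]; exact Submodule.mem_map_of_mem ha
      exact this
    · rintro x ⟨y, ⟨b, hb, rfl⟩, rfl⟩
      have h1 : LinearMap.prodMap (g₁ : V₁ →ₗ[ℂ] V₁) (g₂ : V₂ →ₗ[ℂ] V₂) (inr ℂ V₁ V₂ b) =
          inr ℂ V₁ V₂ (g₂ b) := by simp
      rw [h1]
      have : g₂ b ∈ W'.comap (inr ℂ V₁ V₂) := by
        rw [← mB]; exact Submodule.mem_map_of_mem hb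
      exact this
    · rintro x ⟨y, hy, rfl⟩
      set z : ↥(W ⊓ C.comap (LinearMap.fst ℂ V₁ V₂) ⊓ D.comap (LinearMap.snd ℂ V₁ V₂)) :=
        ⟨y, hy⟩ with hzdef
      set u' := α'.symm (gC (α z)) with hu'
      have h1 : (u' : V₁ × V₂).1 = g₁ y.1 := by
        have e1 : α' u' = gC (α z) := α'.apply_symm_apply _
        have e2 : (α' u' : V₁) = (u' : V₁ × V₂).1 := hα' u'
        have e3 : (gC (α z) : V₁) = g₁ ((α z : V₁)) := hgCpt (α z)
        have e4 : (α z : V₁) = y.1 := hα z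
        rw [← e2, e1, e3, e4]
      have h2 : g₂ y.2 = (u' : V₁ × V₂).2 := by
        have e0 : (β z : V₂) = y.2 := hβ z
        have e1 : g₂ ((β z : V₂)) = (eD (β z) : V₂) := pD (β z)
        have e2 : eD (β z) = β' u' := by
          rw [hu', heD]
          simp only [LinearEquiv.trans_apply, LinearEquiv.symm_apply_apply]
        have e3 : (β' u' : V₂) = (u' : V₁ × V₂).2 := hβ' u'
        rw [← e0, e1, e2, e3]
      have hfin : LinearMap.prodMap (g₁ : V₁ →ₗ[ℂ] V₁) (g₂ : V₂ →ₗ[ℂ] V₂) y =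
          (u' : V₁ × V₂) := by
        have : LinearMap.prodMap (g₁ : V₁ →ₗ[ℂ] V₁) (g₂ : V₂ →ₗ[ℂ] V₂) y =
            (g₁ y.1, g₂ y.2) := rfl
        rw [this]
        exact Prod.ext h1.symm h2
      rw [hfin]
      exact (Submodule.mem_inf.1 (Submodule.mem_inf.1 u'.2).1).1
  · rw [hW', ← LinearEquiv.coe_prodCongr, LinearEquiv.finrank_map_eq, hW]



lemma mem_fst_iff (x : V₁ × V₂) : x ∈ Submodule.fst ℂ V₁ V₂ ↔ x.2 = 0 := by
  simp [Submodule.fst, Submodule.mem_comap]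

lemma mem_snd_iff (x : V₁ × V₂) : x ∈ Submodule.snd ℂ V₁ V₂ ↔ x.1 = 0 := by
  simp [Submodule.snd, Submodule.mem_comap]

lemma map_prod_fst (g₁ : V₁ ≃ₗ[ℂ] V₁) (g₂ : V₂ ≃ₗ[ℂ] V₂) :
    (Submodule.fst ℂ V₁ V₂).map (LinearMap.prodMap (g₁ : V₁ →ₗ[ℂ] V₁) (g₂ : V₂ →ₗ[ℂ] V₂)) =
      Submodule.fst ℂ V₁ V₂ := by
  apply le_antisymm
  · rintro x ⟨y, hy, rfl⟩
    rw [mem_fst_iff]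
    have hy2 : y.2 = 0 := (mem_fst_iff y).1 hy
    show g₂ y.2 = 0
    rw [hy2, map_zero]
  · intro x hx
    have hx2 : x.2 = 0 := (mem_fst_iff x).1 hx
    refine ⟨(g₁.symm x.1, 0), ?_, ?_⟩
    · exact (mem_fst_iff (V₁ := V₁) (V₂ := V₂) (g₁.symm x.1, 0)).2 rfl
    · show (g₁ (g₁.symm x.1), g₂ 0) = x
      rw [g₁.apply_symm_apply, map_zero]
      exact Prod.ext rfl hx2.symm

lemma map_prod_snd (g₁ : V₁ ≃ₗ[ℂ] V₁) (g₂ : V₂ ≃ₗ[ℂ] V₂) :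
    (Submodule.snd ℂ V₁ V₂).map (LinearMap.prodMap (g₁ : V₁ →ₗ[ℂ] V₁) (g₂ : V₂ →ₗ[ℂ] V₂)) =
      Submodule.snd ℂ V₁ V₂ := by
  apply le_antisymm
  · rintro x ⟨y, hy, rfl⟩
    rw [mem_snd_iff]
    have hy1 : y.1 = 0 := (mem_snd_iff y).1 hy
    show g₁ y.1 = 0
    rw [hy1, map_zero]
  · intro x hx
    have hx1 : x.1 = 0 := (mem_snd_iff x).1 hx
    refine ⟨(0, g₂.symm x.2), ?_, ?_⟩
    · exact (mem_snd_iff (V₁ := V₁) (V₂ := V₂) (0, g₂.symm x.2)).2 rfl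
    · show (g₁ 0, g₂ (g₂.symm x.2)) = x
      rw [g₂.apply_symm_apply, map_zero]
      exact Prod.ext hx1.symm rfl

end Stmt18Aux


open Stmt18Aux in
/-- Two pairs `(W, L)` and `(W', L')`, where `W, W' ⊆ V = V₁ ⊕ V₂` are
`k`-dimensional subspaces and `L, L' ⊆ V₁` are lines, are conjugate under
`GL(V₁) × GL(V₂)` (acting as `g₁ ⊕ g₂`) iff `dim (W ∩ V₁) = dim (W' ∩ V₁)`,
`dim (W ∩ V₂) = dim (W' ∩ V₂)`, (`L ⊆ W` iff `L' ⊆ W'`) and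
(`L ⊆ W + V₂` iff `L' ⊆ W' + V₂`). -/
theorem stmt18 (p q k : ℕ) (hp : 1 ≤ p) (hq : 1 ≤ q) (hk : k ≤ p + q)
    (V₁ V₂ : Type) [AddCommGroup V₁] [Module ℂ V₁] [FiniteDimensional ℂ V₁]
    [AddCommGroup V₂] [Module ℂ V₂] [FiniteDimensional ℂ V₂]
    (hV₁ : Module.finrank ℂ V₁ = p) (hV₂ : Module.finrank ℂ V₂ = q)
    (W W' : Submodule ℂ (V₁ × V₂))
    (hW : Module.finrank ℂ W = k) (hW' : Module.finrank ℂ W' = k)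
    (L L' : Submodule ℂ V₁)
    (hL : Module.finrank ℂ L = 1) (hL' : Module.finrank ℂ L' = 1) :
    (∃ (g₁ : V₁ ≃ₗ[ℂ] V₁) (g₂ : V₂ ≃ₗ[ℂ] V₂),
        Submodule.map
          (LinearMap.prodMap (g₁ : V₁ →ₗ[ℂ] V₁) (g₂ : V₂ →ₗ[ℂ] V₂)) W = W' ∧
        Submodule.map (g₁ : V₁ →ₗ[ℂ] V₁) L = L') ↔
      (Module.finrank ℂ (W ⊓ Submodule.fst ℂ V₁ V₂ : Submodule ℂ (V₁ × V₂)) =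
          Module.finrank ℂ (W' ⊓ Submodule.fst ℂ V₁ V₂ : Submodule ℂ (V₁ × V₂)) ∧
        Module.finrank ℂ (W ⊓ Submodule.snd ℂ V₁ V₂ : Submodule ℂ (V₁ × V₂)) =
          Module.finrank ℂ (W' ⊓ Submodule.snd ℂ V₁ V₂ : Submodule ℂ (V₁ × V₂)) ∧
        (Submodule.map (LinearMap.inl ℂ V₁ V₂) L ≤ W ↔
          Submodule.map (LinearMap.inl ℂ V₁ V₂) L' ≤ W') ∧
        (Submodule.map (LinearMap.inl ℂ V₁ V₂) L ≤ W ⊔ Submodule.snd ℂ V₁ V₂ ↔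
          Submodule.map (LinearMap.inl ℂ V₁ V₂) L' ≤ W' ⊔ Submodule.snd ℂ V₁ V₂)) := by
  constructor
  · rintro ⟨g₁, g₂, hWm, hLm⟩
    have hinj : Function.Injective
        (LinearMap.prodMap (g₁ : V₁ →ₗ[ℂ] V₁) (g₂ : V₂ →ₗ[ℂ] V₂)) := by
      rw [← LinearEquiv.coe_prodCongr]
      exact (g₁.prodCongr g₂).injective
    have hcomp : (LinearMap.prodMap (g₁ : V₁ →ₗ[ℂ] V₁) (g₂ : V₂ →ₗ[ℂ] V₂)).comp
        (LinearMap.inl ℂ V₁ V₂) = (LinearMap.inl ℂ V₁ V₂).comp (g₁ : V₁ →ₗ[ℂ] V₁) := by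
      ext x <;> simp
    have hmapL : (L.map (LinearMap.inl ℂ V₁ V₂)).map
        (LinearMap.prodMap (g₁ : V₁ →ₗ[ℂ] V₁) (g₂ : V₂ →ₗ[ℂ] V₂)) =
        L'.map (LinearMap.inl ℂ V₁ V₂) := by
      rw [← Submodule.map_comp, hcomp, Submodule.map_comp, hLm]
    refine ⟨?_, ?_, ?_, ?_⟩
    · conv_rhs => rw [← hWm, ← map_prod_fst g₁ g₂, ← Submodule.map_inf _ hinj]
      rw [finrank_map_inj _ hinj]
    · conv_rhs => rw [← hWm, ← map_prod_snd g₁ g₂, ← Submodule.map_inf _ hinj]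
      rw [finrank_map_inj _ hinj]
    · conv_rhs => rw [← hWm, ← hmapL]
      exact (Submodule.map_le_map_iff_of_injective hinj _ _).symm
    · conv_rhs => rw [← hWm, ← hmapL, ← map_prod_snd g₁ g₂, ← Submodule.map_sup]
      exact (Submodule.map_le_map_iff_of_injective hinj _ _).symm
  · rintro ⟨h1, h2, h3, h4⟩
    have hA : finrank ℂ (W.comap (LinearMap.inl ℂ V₁ V₂)) =
        finrank ℂ (W'.comap (LinearMap.inl ℂ V₁ V₂)) := by
      rw [finrank_comap_inl, finrank_comap_inl]; exact h1
    have hB : finrank ℂ (W.comap (LinearMap.inr ℂ V₁ V₂)) =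
        finrank ℂ (W'.comap (LinearMap.inr ℂ V₁ V₂)) := by
      rw [finrank_comap_inr, finrank_comap_inr]; exact h2
    have h3' : L ≤ W.comap (LinearMap.inl ℂ V₁ V₂) ↔
        L' ≤ W'.comap (LinearMap.inl ℂ V₁ V₂) := by
      rw [← cond3_iff, ← cond3_iff]; exact h3
    have h4' : L ≤ W.map (LinearMap.fst ℂ V₁ V₂) ↔
        L' ≤ W'.map (LinearMap.fst ℂ V₁ V₂) := by
      rw [← cond4_iff, ← cond4_iff]; exact h4
    have hrP := rank_split_fst W
    have hrP' := rank_split_fst W'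
    rw [hW] at hrP
    rw [hW'] at hrP'
    have hP : finrank ℂ (W.map (LinearMap.fst ℂ V₁ V₂)) =
        finrank ℂ (W'.map (LinearMap.fst ℂ V₁ V₂)) := by omega
    by_cases hLA : L ≤ W.comap (LinearMap.inl ℂ V₁ V₂)
    · -- Case 1 : L ≤ A
      have hLA' : L' ≤ W'.comap (LinearMap.inl ℂ V₁ V₂) := h3'.1 hLA
      obtain ⟨MA, hLMA, hLMAA⟩ := compl_in hLA
      obtain ⟨MA', hLMA', hLMAA'⟩ := compl_in hLA'
      obtain ⟨C, hACb, hACP⟩ := compl_in (A_le_P W)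
      obtain ⟨C', hACb', hACP'⟩ := compl_in (A_le_P W')
      obtain ⟨R, hPR⟩ := Submodule.exists_isCompl (W.map (LinearMap.fst ℂ V₁ V₂))
      obtain ⟨R', hPR'⟩ := Submodule.exists_isCompl (W'.map (LinearMap.fst ℂ V₁ V₂))
      have hrMA := Submodule.finrank_sup_add_finrank_inf_eq L MA
      rw [hLMA, hLMAA, finrank_bot, hL] at hrMA
      have hrMA' := Submodule.finrank_sup_add_finrank_inf_eq L' MA'
      rw [hLMA', hLMAA', finrank_bot, hL'] at hrMA'
      have hMA : finrank ℂ MA = finrank ℂ MA' := by omega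
      have hrC := Submodule.finrank_sup_add_finrank_inf_eq (W.comap (LinearMap.inl ℂ V₁ V₂)) C
      rw [hACb, hACP, finrank_bot] at hrC
      have hrC' := Submodule.finrank_sup_add_finrank_inf_eq (W'.comap (LinearMap.inl ℂ V₁ V₂)) C'
      rw [hACb', hACP', finrank_bot] at hrC'
      have hC : finrank ℂ C = finrank ℂ C' := by omega
      have hrR := Submodule.finrank_sup_add_finrank_inf_eq (W.map (LinearMap.fst ℂ V₁ V₂)) R
      rw [hPR.inf_eq_bot, codisjoint_iff.1 hPR.codisjoint, finrank_bot, finrank_top] at hrR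
      have hrR' := Submodule.finrank_sup_add_finrank_inf_eq (W'.map (LinearMap.fst ℂ V₁ V₂)) R'
      rw [hPR'.inf_eq_bot, codisjoint_iff.1 hPR'.codisjoint, finrank_bot, finrank_top] at hrR'
      have hR : finrank ℂ R = finrank ℂ R' := by omega
      obtain ⟨g₁, p0, p1, p2, p3, m0, m1, m2, m3⟩ :=
        four_block rfl L MA C R L' MA' C' R'
          hLMA (by rw [hLMAA]; exact hACb) (by rw [hLMAA, hACP]; exact hPR.inf_eq_bot)
          (by rw [hLMAA, hACP]; exact codisjoint_iff.1 hPR.codisjoint)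
          (by rw [hLMAA', hACP']; exact codisjoint_iff.1 hPR'.codisjoint)
          (LinearEquiv.ofFinrankEq _ _ (by rw [hL, hL'])) (LinearEquiv.ofFinrankEq _ _ hMA)
          (LinearEquiv.ofFinrankEq _ _ hC) (LinearEquiv.ofFinrankEq _ _ hR)
      have hg₁A : (W.comap (LinearMap.inl ℂ V₁ V₂)).map (g₁ : V₁ →ₗ[ℂ] V₁) =
          W'.comap (LinearMap.inl ℂ V₁ V₂) := by
        rw [← hLMAA, Submodule.map_sup, m0, m1, hLMAA']
      obtain ⟨g₂, hg₂⟩ := core W W' hW hW' C C' hACb hACP hACb' hACP' hB g₁ hg₁A m2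
      exact ⟨g₁, g₂, hg₂, m0⟩
    · by_cases hLP : L ≤ W.map (LinearMap.fst ℂ V₁ V₂)
      · -- Case 2 : L ≤ P but not L ≤ A
        have hLP' : L' ≤ W'.map (LinearMap.fst ℂ V₁ V₂) := h4'.1 hLP
        have hLA' : ¬ L' ≤ W'.comap (LinearMap.inl ℂ V₁ V₂) := fun h => hLA (h3'.2 h)
        have hdisj : L ⊓ W.comap (LinearMap.inl ℂ V₁ V₂) = ⊥ := line_inf hL hLA
        have hdisj' : L' ⊓ W'.comap (LinearMap.inl ℂ V₁ V₂) = ⊥ := line_inf hL' hLA'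
        have hdisjA : W.comap (LinearMap.inl ℂ V₁ V₂) ⊓ L = ⊥ := by rw [inf_comm]; exact hdisj
        have hdisjA' : W'.comap (LinearMap.inl ℂ V₁ V₂) ⊓ L' = ⊥ := by
          rw [inf_comm]; exact hdisj'
        have hALP : W.comap (LinearMap.inl ℂ V₁ V₂) ⊔ L ≤ W.map (LinearMap.fst ℂ V₁ V₂) :=
          sup_le (A_le_P W) hLP
        have hALP' : W'.comap (LinearMap.inl ℂ V₁ V₂) ⊔ L' ≤ W'.map (LinearMap.fst ℂ V₁ V₂) :=
          sup_le (A_le_P W') hLP'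
        obtain ⟨C2, hALC2, hALC2P⟩ := compl_in hALP
        obtain ⟨C2', hALC2', hALC2P'⟩ := compl_in hALP'
        obtain ⟨R, hPR⟩ := Submodule.exists_isCompl (W.map (LinearMap.fst ℂ V₁ V₂))
        obtain ⟨R', hPR'⟩ := Submodule.exists_isCompl (W'.map (LinearMap.fst ℂ V₁ V₂))
        have hrAL := Submodule.finrank_sup_add_finrank_inf_eq
          (W.comap (LinearMap.inl ℂ V₁ V₂)) L
        rw [hdisjA, finrank_bot, hL] at hrAL
        have hrAL' := Submodule.finrank_sup_add_finrank_inf_eq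
          (W'.comap (LinearMap.inl ℂ V₁ V₂)) L'
        rw [hdisjA', finrank_bot, hL'] at hrAL'
        have hrC2 := Submodule.finrank_sup_add_finrank_inf_eq
          (W.comap (LinearMap.inl ℂ V₁ V₂) ⊔ L) C2
        rw [hALC2, hALC2P, finrank_bot] at hrC2
        have hrC2' := Submodule.finrank_sup_add_finrank_inf_eq
          (W'.comap (LinearMap.inl ℂ V₁ V₂) ⊔ L') C2'
        rw [hALC2', hALC2P', finrank_bot] at hrC2'
        have hC2 : finrank ℂ C2 = finrank ℂ C2' := by omega
        have hrR := Submodule.finrank_sup_add_finrank_inf_eq (W.map (LinearMap.fst ℂ V₁ V₂)) R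
        rw [hPR.inf_eq_bot, codisjoint_iff.1 hPR.codisjoint, finrank_bot, finrank_top] at hrR
        have hrR' := Submodule.finrank_sup_add_finrank_inf_eq (W'.map (LinearMap.fst ℂ V₁ V₂)) R'
        rw [hPR'.inf_eq_bot, codisjoint_iff.1 hPR'.codisjoint, finrank_bot, finrank_top] at hrR'
        have hR : finrank ℂ R = finrank ℂ R' := by omega
        obtain ⟨g₁, p0, p1, p2, p3, m0, m1, m2, m3⟩ :=
          four_block rfl (W.comap (LinearMap.inl ℂ V₁ V₂)) L C2 R
            (W'.comap (LinearMap.inl ℂ V₁ V₂)) L' C2' R'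
            hdisjA hALC2 (by rw [hALC2P]; exact hPR.inf_eq_bot)
            (by rw [hALC2P]; exact codisjoint_iff.1 hPR.codisjoint)
            (by rw [hALC2P']; exact codisjoint_iff.1 hPR'.codisjoint)
            (LinearEquiv.ofFinrankEq _ _ hA) (LinearEquiv.ofFinrankEq _ _ (by rw [hL, hL']))
            (LinearEquiv.ofFinrankEq _ _ hC2) (LinearEquiv.ofFinrankEq _ _ hR)
        have hACb : W.comap (LinearMap.inl ℂ V₁ V₂) ⊓ (L ⊔ C2) = ⊥ := by
          rw [eq_bot_iff]
          rintro x ⟨hxA, hxLC⟩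
          rcases mem_sup.1 hxLC with ⟨l, hl, c, hc, hlc⟩
          have hc0 : c = 0 := by
            have hmem : c ∈ (W.comap (LinearMap.inl ℂ V₁ V₂) ⊔ L) ⊓ C2 := by
              refine ⟨?_, hc⟩
              have : c = x - l := by rw [← hlc]; abel
              rw [this]
              exact sub_mem (mem_sup_left hxA) (mem_sup_right hl)
            rw [hALC2] at hmem
            exact hmem
          have hxl : x = l := by rw [← hlc, hc0, add_zero]
          have hmem : x ∈ W.comap (LinearMap.inl ℂ V₁ V₂) ⊓ L := ⟨hxA, hxl ▸ hl⟩
          rw [hdisjA] at hmem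
          exact hmem
        have hACb' : W'.comap (LinearMap.inl ℂ V₁ V₂) ⊓ (L' ⊔ C2') = ⊥ := by
          rw [eq_bot_iff]
          rintro x ⟨hxA, hxLC⟩
          rcases mem_sup.1 hxLC with ⟨l, hl, c, hc, hlc⟩
          have hc0 : c = 0 := by
            have hmem : c ∈ (W'.comap (LinearMap.inl ℂ V₁ V₂) ⊔ L') ⊓ C2' := by
              refine ⟨?_, hc⟩
              have : c = x - l := by rw [← hlc]; abel
              rw [this]
              exact sub_mem (mem_sup_left hxA) (mem_sup_right hl)
            rw [hALC2'] at hmem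
            exact hmem
          have hxl : x = l := by rw [← hlc, hc0, add_zero]
          have hmem : x ∈ W'.comap (LinearMap.inl ℂ V₁ V₂) ⊓ L' := ⟨hxA, hxl ▸ hl⟩
          rw [hdisjA'] at hmem
          exact hmem
        have hACP2 : W.comap (LinearMap.inl ℂ V₁ V₂) ⊔ (L ⊔ C2) =
            W.map (LinearMap.fst ℂ V₁ V₂) := by rw [← sup_assoc, hALC2P]
        have hACP2' : W'.comap (LinearMap.inl ℂ V₁ V₂) ⊔ (L' ⊔ C2') =
            W'.map (LinearMap.fst ℂ V₁ V₂) := by rw [← sup_assoc, hALC2P']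
        have hmC : (L ⊔ C2).map (g₁ : V₁ →ₗ[ℂ] V₁) = L' ⊔ C2' := by
          rw [Submodule.map_sup, m1, m2]
        obtain ⟨g₂, hg₂⟩ := core W W' hW hW' (L ⊔ C2) (L' ⊔ C2')
          hACb hACP2 hACb' hACP2' hB g₁ m0 hmC
        exact ⟨g₁, g₂, hg₂, m1⟩
      · -- Case 3 : not L ≤ P
        have hLP' : ¬ L' ≤ W'.map (LinearMap.fst ℂ V₁ V₂) := fun h => hLP (h4'.2 h)
        have hdisjP : L ⊓ W.map (LinearMap.fst ℂ V₁ V₂) = ⊥ := line_inf hL hLP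
        have hdisjP' : L' ⊓ W'.map (LinearMap.fst ℂ V₁ V₂) = ⊥ := line_inf hL' hLP'
        have hPdisj : W.map (LinearMap.fst ℂ V₁ V₂) ⊓ L = ⊥ := by rw [inf_comm]; exact hdisjP
        have hPdisj' : W'.map (LinearMap.fst ℂ V₁ V₂) ⊓ L' = ⊥ := by
          rw [inf_comm]; exact hdisjP'
        obtain ⟨C, hACb, hACP⟩ := compl_in (A_le_P W)
        obtain ⟨C', hACb', hACP'⟩ := compl_in (A_le_P W')
        obtain ⟨R3, hPLR3, hPLR3T⟩ :=
          compl_in (le_top : W.map (LinearMap.fst ℂ V₁ V₂) ⊔ L ≤ ⊤)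
        obtain ⟨R3', hPLR3', hPLR3T'⟩ :=
          compl_in (le_top : W'.map (LinearMap.fst ℂ V₁ V₂) ⊔ L' ≤ ⊤)
        have hrC := Submodule.finrank_sup_add_finrank_inf_eq (W.comap (LinearMap.inl ℂ V₁ V₂)) C
        rw [hACb, hACP, finrank_bot] at hrC
        have hrC' := Submodule.finrank_sup_add_finrank_inf_eq
          (W'.comap (LinearMap.inl ℂ V₁ V₂)) C'
        rw [hACb', hACP', finrank_bot] at hrC'
        have hC : finrank ℂ C = finrank ℂ C' := by omega
        have hrPL := Submodule.finrank_sup_add_finrank_inf_eq (W.map (LinearMap.fst ℂ V₁ V₂)) L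
        rw [hPdisj, finrank_bot, hL] at hrPL
        have hrPL' := Submodule.finrank_sup_add_finrank_inf_eq
          (W'.map (LinearMap.fst ℂ V₁ V₂)) L'
        rw [hPdisj', finrank_bot, hL'] at hrPL'
        have hrR3 := Submodule.finrank_sup_add_finrank_inf_eq
          (W.map (LinearMap.fst ℂ V₁ V₂) ⊔ L) R3
        rw [hPLR3, hPLR3T, finrank_bot, finrank_top] at hrR3
        have hrR3' := Submodule.finrank_sup_add_finrank_inf_eq
          (W'.map (LinearMap.fst ℂ V₁ V₂) ⊔ L') R3'
        rw [hPLR3', hPLR3T', finrank_bot, finrank_top] at hrR3'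
        have hR3 : finrank ℂ R3 = finrank ℂ R3' := by omega
        obtain ⟨g₁, p0, p1, p2, p3, m0, m1, m2, m3⟩ :=
          four_block rfl (W.comap (LinearMap.inl ℂ V₁ V₂)) C L R3
            (W'.comap (LinearMap.inl ℂ V₁ V₂)) C' L' R3'
            hACb (by rw [hACP]; exact hPdisj) (by rw [hACP]; exact hPLR3)
            (by rw [hACP]; exact hPLR3T)
            (by rw [hACP']; exact hPLR3T')
            (LinearEquiv.ofFinrankEq _ _ hA) (LinearEquiv.ofFinrankEq _ _ hC)
            (LinearEquiv.ofFinrankEq _ _ (by rw [hL, hL'])) (LinearEquiv.ofFinrankEq _ _ hR3)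
        obtain ⟨g₂, hg₂⟩ := core W W' hW hW' C C' hACb hACP hACb' hACP' hB g₁ m0 m1
        exact ⟨g₁, g₂, hg₂, m2⟩
end

section
/- Let W, W' ⊆ V be k-dimensional subspaces. Then there exists a pair (g₁, g₂) ∈ GL(V₁) × GL(V₂), acting on V = V₁ ⊕ V₂ as the direct sum g₁ ⊕ g₂, with (g₁ ⊕ g₂)(W) = W', if and only if dim(W ∩ V₁) = dim(W' ∩ V₁) and dim(W ∩ V₂) = dim(W' ∩ V₂). -/
open Module Submodule

theorem aux_exists_equiv_of_li {K V : Type*} [Field K] [AddCommGroup V] [Module K V]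
    [FiniteDimensional K V] {ι : Type*} [Fintype ι] {f g : ι → V}
    (hf : LinearIndependent K f) (hg : LinearIndependent K g) :
    ∃ e : V ≃ₗ[K] V, ∀ i, e (f i) = g i := by
  classical
  set Pf := span K (Set.range f) with hPf
  set Pg := span K (Set.range g) with hPg
  obtain ⟨Qf, hQf⟩ := Pf.exists_isCompl
  obtain ⟨Qg, hQg⟩ := Pg.exists_isCompl
  have hrf : finrank K Pf = Fintype.card ι := finrank_span_eq_card hf
  have hrg : finrank K Pg = Fintype.card ι := finrank_span_eq_card hg
  have hq : finrank K Qg = finrank K Qf := by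
    have h1 := Submodule.finrank_add_eq_of_isCompl hQf
    have h2 := Submodule.finrank_add_eq_of_isCompl hQg
    omega
  let bf : Basis ι K Pf := Basis.span hf
  let bg : Basis ι K Pg := Basis.span hg
  let bQf : Basis (Fin (finrank K Qf)) K Qf := finBasis K Qf
  let bQg : Basis (Fin (finrank K Qf)) K Qg := finBasisOfFinrankEq K Qg hq
  let Bf : Basis (ι ⊕ Fin (finrank K Qf)) K V :=
    (bf.prod bQf).map (Submodule.prodEquivOfIsCompl _ _ hQf)
  let Bg : Basis (ι ⊕ Fin (finrank K Qf)) K V :=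
    (bg.prod bQg).map (Submodule.prodEquivOfIsCompl _ _ hQg)
  refine ⟨Bf.equiv Bg (Equiv.refl _), fun i => ?_⟩
  have hfi : f i = Bf (Sum.inl i) := by
    simp [Bf, Basis.prod_apply, Submodule.coe_prodEquivOfIsCompl, bf, Basis.span_apply]
    exact congrArg Subtype.val (Basis.span_apply hf i).symm
  have hgi : g i = Bg (Sum.inl i) := by
    simp [Bg, Basis.prod_apply, Submodule.coe_prodEquivOfIsCompl, bg, Basis.span_apply]
    exact congrArg Subtype.val (Basis.span_apply hg i).symm
  rw [hfi, hgi, Basis.equiv_apply, Equiv.refl_apply]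

theorem aux_disj3 {R M : Type*} [Ring R] [AddCommGroup M] [Module R M]
    {A B C : Submodule R M} (hAB : Disjoint A B) (hC : Disjoint (A ⊔ B) C) :
    Disjoint B (A ⊔ C) := by
  rw [disjoint_def]
  intro x hxB hx
  obtain ⟨p, hp, q, hq, rfl⟩ := mem_sup.mp hx
  have hq0 : q = 0 := by
    refine (disjoint_def.mp hC) q ?_ hq
    have h2 : q = (p + q) - p := by abel
    rw [h2]
    exact sub_mem (le_sup_right (a := A) hxB) (le_sup_left (b := B) hp)
  subst hq0
  rw [add_zero] at hxB ⊢
  exact (disjoint_def.mp hAB) p hp hxB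

theorem aux_adapted {V₁ V₂ : Type*} [AddCommGroup V₁] [Module ℂ V₁] [AddCommGroup V₂]
    [Module ℂ V₂] [FiniteDimensional ℂ V₁] [FiniteDimensional ℂ V₂]
    (W : Submodule ℂ (V₁ × V₂)) (a b c : ℕ)
    (ha : finrank ℂ (W ⊓ Submodule.fst ℂ V₁ V₂ : Submodule ℂ (V₁ × V₂)) = a)
    (hb : finrank ℂ (W ⊓ Submodule.snd ℂ V₁ V₂ : Submodule ℂ (V₁ × V₂)) = b)
    (hc : finrank ℂ W = a + b + c) :
    ∃ (u : Fin a → V₁) (v : Fin b → V₂) (z : Fin c → V₁ × V₂),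
      LinearIndependent ℂ (Sum.elim u (fun i => (z i).1)) ∧
      LinearIndependent ℂ (Sum.elim v (fun i => (z i).2)) ∧
      W = span ℂ (Set.range (fun j => ((u j, 0) : V₁ × V₂)) ∪
            Set.range (fun j => ((0, v j) : V₁ × V₂)) ∪ Set.range z) := by
  classical
  set A := W ⊓ Submodule.fst ℂ V₁ V₂ with hA
  set B := W ⊓ Submodule.snd ℂ V₁ V₂ with hB
  have hAW : A ≤ W := inf_le_left
  have hBW : B ≤ W := inf_le_left
  have hABW : A ⊔ B ≤ W := sup_le hAW hBW
  have hABd : Disjoint A B := by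
    rw [disjoint_iff, eq_bot_iff, ← Submodule.fst_inf_snd ℂ V₁ V₂]
    exact le_inf (inf_le_of_left_le inf_le_right) (inf_le_of_right_le inf_le_right)
  obtain ⟨bA⟩ : Nonempty (Basis (Fin a) ℂ A) := ⟨finBasisOfFinrankEq ℂ A ha⟩
  obtain ⟨bB⟩ : Nonempty (Basis (Fin b) ℂ B) := ⟨finBasisOfFinrankEq ℂ B hb⟩
  set fA : Fin a → V₁ × V₂ := fun j => (bA j : V₁ × V₂) with hfAdef
  set fB : Fin b → V₁ × V₂ := fun j => (bB j : V₁ × V₂) with hfBdef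
  have hfA : LinearIndependent ℂ fA :=
    bA.linearIndependent.map' A.subtype (ker_subtype A)
  have hfB : LinearIndependent ℂ fB :=
    bB.linearIndependent.map' B.subtype (ker_subtype B)
  have hspanA : span ℂ (Set.range fA) = A := by
    have h1 : Set.range fA = A.subtype '' Set.range bA := by
      rw [← Set.range_comp]; rfl
    rw [h1, ← Submodule.map_span, bA.span_eq, Submodule.map_top, range_subtype]
  have hspanB : span ℂ (Set.range fB) = B := by
    have h1 : Set.range fB = B.subtype '' Set.range bB := by
      rw [← Set.range_comp]; rfl
    rw [h1, ← Submodule.map_span, bB.span_eq, Submodule.map_top, range_subtype]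
  obtain ⟨C', hC'⟩ := (A ⊔ B).exists_isCompl
  set Cv : Submodule ℂ (V₁ × V₂) := C' ⊓ W with hCv
  have hCvW : Cv ≤ W := inf_le_right
  have hsup : A ⊔ B ⊔ Cv = W := by
    rw [hCv, ← sup_inf_assoc_of_le C' hABW, hC'.sup_eq_top, top_inf_eq]
  have hdisjABC : Disjoint (A ⊔ B) Cv := hC'.disjoint.mono_right inf_le_left
  have hrAB : finrank ℂ (A ⊔ B : Submodule ℂ (V₁ × V₂)) = a + b := by
    have h2 := Submodule.finrank_sup_add_finrank_inf_eq A B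
    rw [hABd.eq_bot, finrank_bot, ha, hb] at h2
    omega
  have hrCv : finrank ℂ Cv = c := by
    have h1 := Submodule.finrank_sup_add_finrank_inf_eq (A ⊔ B) Cv
    rw [hsup, hdisjABC.eq_bot, finrank_bot, hrAB, hc] at h1
    omega
  obtain ⟨bC⟩ : Nonempty (Basis (Fin c) ℂ Cv) := ⟨finBasisOfFinrankEq ℂ Cv hrCv⟩
  set fC : Fin c → V₁ × V₂ := fun i => (bC i : V₁ × V₂) with hfCdef
  have hfC : LinearIndependent ℂ fC :=
    bC.linearIndependent.map' Cv.subtype (ker_subtype Cv)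
  have hspanC : span ℂ (Set.range fC) = Cv := by
    have h1 : Set.range fC = Cv.subtype '' Set.range bC := by
      rw [← Set.range_comp]; rfl
    rw [h1, ← Submodule.map_span, bC.span_eq, Submodule.map_top, range_subtype]
  have hmemA2 : ∀ j, (fA j).2 = 0 := by
    intro j
    have h1 : fA j ∈ A := by rw [hfAdef]; exact (bA j).2
    have h2 : fA j ∈ Submodule.fst ℂ V₁ V₂ := (inf_le_right : A ≤ _) h1
    simpa [Submodule.fst] using h2
  have hmemB1 : ∀ j, (fB j).1 = 0 := by
    intro j
    have h1 : fB j ∈ B := by rw [hfBdef]; exact (bB j).2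
    have h2 : fB j ∈ Submodule.snd ℂ V₁ V₂ := (inf_le_right : B ≤ _) h1
    simpa [Submodule.snd] using h2
  refine ⟨fun j => (fA j).1, fun j => (fB j).2, fC, ?_, ?_, ?_⟩
  · have hAC : LinearIndependent ℂ (Sum.elim fA fC) := by
      refine hfA.sum_type hfC ?_
      rw [hspanA, hspanC]
      exact hdisjABC.mono_left le_sup_left
    have hker : Disjoint (span ℂ (Set.range (Sum.elim fA fC)))
        (LinearMap.ker (LinearMap.fst ℂ V₁ V₂)) := by
      rw [Set.Sum.elim_range, Submodule.span_union, hspanA, hspanC, disjoint_def]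
      intro x hx hker
      have hx1 : x.1 = 0 := by simpa using hker
      have hxW : x ∈ W := (sup_le hAW hCvW) hx
      have hxB : x ∈ B := by
        rw [hB]
        exact Submodule.mem_inf.mpr ⟨hxW, by simpa [Submodule.snd] using hx1⟩
      exact (disjoint_def.mp (aux_disj3 hABd hdisjABC)) x hxB hx
    have h1 := hAC.map (f := LinearMap.fst ℂ V₁ V₂) hker
    have heq : (LinearMap.fst ℂ V₁ V₂) ∘ Sum.elim fA fC =
        Sum.elim (fun j => (fA j).1) (fun i => (fC i).1) := by
      funext i; cases i <;> rfl
    rwa [heq] at h1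
  · have hBC : LinearIndependent ℂ (Sum.elim fB fC) := by
      refine hfB.sum_type hfC ?_
      rw [hspanB, hspanC]
      exact hdisjABC.mono_left le_sup_right
    have hker : Disjoint (span ℂ (Set.range (Sum.elim fB fC)))
        (LinearMap.ker (LinearMap.snd ℂ V₁ V₂)) := by
      rw [Set.Sum.elim_range, Submodule.span_union, hspanB, hspanC, disjoint_def]
      intro x hx hker
      have hx2 : x.2 = 0 := by simpa using hker
      have hxW : x ∈ W := (sup_le hBW hCvW) hx
      have hxA : x ∈ A := by
        rw [hA]
        exact Submodule.mem_inf.mpr ⟨hxW, by simpa [Submodule.fst] using hx2⟩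
      have hd : Disjoint A (B ⊔ Cv) :=
        aux_disj3 hABd.symm (by rwa [sup_comm A B] at hdisjABC)
      exact (disjoint_def.mp hd) x hxA hx
    have h1 := hBC.map (f := LinearMap.snd ℂ V₁ V₂) hker
    have heq : (LinearMap.snd ℂ V₁ V₂) ∘ Sum.elim fB fC =
        Sum.elim (fun j => (fB j).2) (fun i => (fC i).2) := by
      funext i; cases i <;> rfl
    rwa [heq] at h1
  · have hA' : Set.range (fun j => (((fA j).1, (0 : V₂)) : V₁ × V₂)) = Set.range fA := by
      have hfun : (fun j => (((fA j).1, (0 : V₂)) : V₁ × V₂)) = fA :=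
        funext fun j => Prod.ext_iff.mpr ⟨rfl, (hmemA2 j).symm⟩
      rw [hfun]
    have hB' : Set.range (fun j => (((0 : V₁), (fB j).2) : V₁ × V₂)) = Set.range fB := by
      have hfun : (fun j => (((0 : V₁), (fB j).2) : V₁ × V₂)) = fB :=
        funext fun j => Prod.ext_iff.mpr ⟨(hmemB1 j).symm, rfl⟩
      rw [hfun]
    rw [hA', hB', Submodule.span_union, Submodule.span_union, hspanA, hspanB, hspanC, hsup]

/-- Two `k`-dimensional subspaces `W, W' ⊆ V = V₁ ⊕ V₂` are conjugate under
`GL(V₁) × GL(V₂)` (acting as `g₁ ⊕ g₂`) iff `dim (W ∩ V₁) = dim (W' ∩ V₁)` and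
`dim (W ∩ V₂) = dim (W' ∩ V₂)`. -/
theorem stmt19 (p q k : ℕ) (hp : 1 ≤ p) (hq : 1 ≤ q) (hk : k ≤ p + q)
    (V₁ V₂ : Type) [AddCommGroup V₁] [Module ℂ V₁] [FiniteDimensional ℂ V₁]
    [AddCommGroup V₂] [Module ℂ V₂] [FiniteDimensional ℂ V₂]
    (hV₁ : Module.finrank ℂ V₁ = p) (hV₂ : Module.finrank ℂ V₂ = q)
    (W W' : Submodule ℂ (V₁ × V₂))
    (hW : Module.finrank ℂ W = k) (hW' : Module.finrank ℂ W' = k) :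
    (∃ (g₁ : V₁ ≃ₗ[ℂ] V₁) (g₂ : V₂ ≃ₗ[ℂ] V₂),
        Submodule.map
          (LinearMap.prodMap (g₁ : V₁ →ₗ[ℂ] V₁) (g₂ : V₂ →ₗ[ℂ] V₂)) W = W') ↔
      (Module.finrank ℂ (W ⊓ Submodule.fst ℂ V₁ V₂ : Submodule ℂ (V₁ × V₂)) =
          Module.finrank ℂ (W' ⊓ Submodule.fst ℂ V₁ V₂ : Submodule ℂ (V₁ × V₂)) ∧
        Module.finrank ℂ (W ⊓ Submodule.snd ℂ V₁ V₂ : Submodule ℂ (V₁ × V₂)) =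
          Module.finrank ℂ (W' ⊓ Submodule.snd ℂ V₁ V₂ : Submodule ℂ (V₁ × V₂))) := by
  constructor
  · rintro ⟨g₁, g₂, rfl⟩
    set E := g₁.prodCongr g₂ with hE
    have hEc : (E : (V₁ × V₂) →ₗ[ℂ] V₁ × V₂) =
        LinearMap.prodMap (g₁ : V₁ →ₗ[ℂ] V₁) (g₂ : V₂ →ₗ[ℂ] V₂) := rfl
    have hEinj : Function.Injective (E : (V₁ × V₂) →ₗ[ℂ] V₁ × V₂) := E.injective
    have hfst : Submodule.map (E : (V₁ × V₂) →ₗ[ℂ] V₁ × V₂) (Submodule.fst ℂ V₁ V₂) =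
        Submodule.fst ℂ V₁ V₂ := by
      apply le_antisymm
      · rintro x ⟨y, hy, rfl⟩
        have hy2 : y.2 = 0 := by simpa [Submodule.fst] using hy
        simp [Submodule.fst, hE, hy2]
      · intro x hx
        have hx2 : x.2 = 0 := by simpa [Submodule.fst] using hx
        refine ⟨(g₁.symm x.1, 0), by simp [Submodule.fst], ?_⟩
        ext <;> simp [hE, hx2]
    have hsnd : Submodule.map (E : (V₁ × V₂) →ₗ[ℂ] V₁ × V₂) (Submodule.snd ℂ V₁ V₂) =
        Submodule.snd ℂ V₁ V₂ := by
      apply le_antisymm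
      · rintro x ⟨y, hy, rfl⟩
        have hy1 : y.1 = 0 := by simpa [Submodule.snd] using hy
        simp [Submodule.snd, hE, hy1]
      · intro x hx
        have hx1 : x.1 = 0 := by simpa [Submodule.snd] using hx
        refine ⟨(0, g₂.symm x.2), by simp [Submodule.snd], ?_⟩
        ext <;> simp [hE, hx1]
    have key1 : Submodule.map (E : (V₁ × V₂) →ₗ[ℂ] V₁ × V₂) (W ⊓ Submodule.fst ℂ V₁ V₂) =
        (Submodule.map (E : (V₁ × V₂) →ₗ[ℂ] V₁ × V₂) W) ⊓ Submodule.fst ℂ V₁ V₂ := by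
      rw [Submodule.map_inf _ hEinj, hfst]
    have key2 : Submodule.map (E : (V₁ × V₂) →ₗ[ℂ] V₁ × V₂) (W ⊓ Submodule.snd ℂ V₁ V₂) =
        (Submodule.map (E : (V₁ × V₂) →ₗ[ℂ] V₁ × V₂) W) ⊓ Submodule.snd ℂ V₁ V₂ := by
      rw [Submodule.map_inf _ hEinj, hsnd]
    rw [← hEc]
    constructor
    · rw [← key1]
      exact (LinearEquiv.finrank_map_eq E (W ⊓ Submodule.fst ℂ V₁ V₂)).symm
    · rw [← key2]
      exact (LinearEquiv.finrank_map_eq E (W ⊓ Submodule.snd ℂ V₁ V₂)).symm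
  · rintro ⟨h1, h2⟩
    set a := finrank ℂ (W ⊓ Submodule.fst ℂ V₁ V₂ : Submodule ℂ (V₁ × V₂)) with hadef
    set b := finrank ℂ (W ⊓ Submodule.snd ℂ V₁ V₂ : Submodule ℂ (V₁ × V₂)) with hbdef
    have hab : a + b ≤ k := by
      have hd : Disjoint (W ⊓ Submodule.fst ℂ V₁ V₂) (W ⊓ Submodule.snd ℂ V₁ V₂) := by
        rw [disjoint_iff, eq_bot_iff, ← Submodule.fst_inf_snd ℂ V₁ V₂]
        exact le_inf (inf_le_of_left_le inf_le_right) (inf_le_of_right_le inf_le_right)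
      have h3 := Submodule.finrank_sup_add_finrank_inf_eq
        (W ⊓ Submodule.fst ℂ V₁ V₂) (W ⊓ Submodule.snd ℂ V₁ V₂)
      rw [hd.eq_bot, finrank_bot] at h3
      have h4 : finrank ℂ ((W ⊓ Submodule.fst ℂ V₁ V₂) ⊔ (W ⊓ Submodule.snd ℂ V₁ V₂) :
          Submodule ℂ (V₁ × V₂)) ≤ k := by
        rw [← hW]
        exact Submodule.finrank_mono (sup_le inf_le_left inf_le_left)
      omega
    have hcW : finrank ℂ W = a + b + (k - (a + b)) := by omega
    have hcW' : finrank ℂ W' = a + b + (k - (a + b)) := by omega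
    obtain ⟨u, v, z, hi1, hi2, hWeq⟩ := aux_adapted W a b (k - (a + b)) rfl rfl hcW
    obtain ⟨u', v', z', hi1', hi2', hWeq'⟩ :=
      aux_adapted W' a b (k - (a + b)) h1.symm h2.symm hcW'
    obtain ⟨e₁, he₁⟩ := aux_exists_equiv_of_li hi1 hi1'
    obtain ⟨e₂, he₂⟩ := aux_exists_equiv_of_li hi2 hi2'
    refine ⟨e₁, e₂, ?_⟩
    rw [hWeq, hWeq', Submodule.map_span]
    congr 1
    rw [Set.image_union, Set.image_union]
    have hu : ∀ j, e₁ (u j) = u' j := fun j => he₁ (Sum.inl j)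
    have hv : ∀ j, e₂ (v j) = v' j := fun j => he₂ (Sum.inl j)
    have hz1 : ∀ i, e₁ ((z i).1) = (z' i).1 := fun i => he₁ (Sum.inr i)
    have hz2 : ∀ i, e₂ ((z i).2) = (z' i).2 := fun i => he₂ (Sum.inr i)
    have hU : (LinearMap.prodMap (e₁ : V₁ →ₗ[ℂ] V₁) (e₂ : V₂ →ₗ[ℂ] V₂)) ''
        Set.range (fun j => ((u j, 0) : V₁ × V₂)) =
        Set.range (fun j => ((u' j, 0) : V₁ × V₂)) := by
      rw [← Set.range_comp]
      have hfun : ((LinearMap.prodMap (e₁ : V₁ →ₗ[ℂ] V₁) (e₂ : V₂ →ₗ[ℂ] V₂)) ∘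
          (fun j => ((u j, 0) : V₁ × V₂))) = fun j => ((u' j, 0) : V₁ × V₂) :=
        funext fun j => Prod.ext_iff.mpr ⟨hu j, map_zero e₂⟩
      rw [hfun]
    have hV : (LinearMap.prodMap (e₁ : V₁ →ₗ[ℂ] V₁) (e₂ : V₂ →ₗ[ℂ] V₂)) ''
        Set.range (fun j => (((0 : V₁), v j) : V₁ × V₂)) =
        Set.range (fun j => (((0 : V₁), v' j) : V₁ × V₂)) := by
      rw [← Set.range_comp]
      have hfun : ((LinearMap.prodMap (e₁ : V₁ →ₗ[ℂ] V₁) (e₂ : V₂ →ₗ[ℂ] V₂)) ∘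
          (fun j => (((0 : V₁), v j) : V₁ × V₂))) = fun j => (((0 : V₁), v' j) : V₁ × V₂) :=
        funext fun j => Prod.ext_iff.mpr ⟨map_zero e₁, hv j⟩
      rw [hfun]
    have hZ : (LinearMap.prodMap (e₁ : V₁ →ₗ[ℂ] V₁) (e₂ : V₂ →ₗ[ℂ] V₂)) '' Set.range z =
        Set.range z' := by
      rw [← Set.range_comp]
      have hfun : ((LinearMap.prodMap (e₁ : V₁ →ₗ[ℂ] V₁) (e₂ : V₂ →ₗ[ℂ] V₂)) ∘ z) = z' :=
        funext fun i => Prod.ext_iff.mpr ⟨hz1 i, hz2 i⟩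
      rw [hfun]
    rw [hU, hV, hZ]
end
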